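/- arXiv:1308.3383 — 5 statements merged into one kernel-verified Lean document; each statement's English description precedes it below -/
import Mathlib

section
/- Let C be a partition of a finite node set V with C ≠ {V}, let G be the clique graph of C with edge weight 1 (E(i,j)=1 if i,j in the same cluster of C, including i=j, else 0), and let D be a clustering containing a cluster d that contains two nodes i,j lying in different clusters of C. Then splitting d into d1 = {k∈d : k ∼_C i} and d2 = d\setminus d1 strictly increases modularity: Q(G, D\setminus{d} ∪ {d1,d2}) > Q(G,D). -/
open Finset
open scoped Classical

noncomputable def vol {V : Type*} [Fintype V] (E : V → V → ℝ) (c : Finset V) : ℝ :=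
  ∑ i ∈ c, ∑ j, E i j

noncomputable def win {V : Type*} (E : V → V → ℝ) (c : Finset V) : ℝ :=
  ∑ i ∈ c, ∑ j ∈ c, E i j

noncomputable def Qmod {V : Type*} [Fintype V] (E : V → V → ℝ) (C : Finset (Finset V)) : ℝ :=
  ∑ c ∈ C, (win E c / vol E univ - (vol E c / vol E univ) ^ 2)

/-- `i ∼_P j`: same part of the partition `P`. -/
def samePart {V : Type*} [Fintype V] [DecidableEq V]
    (P : Finpartition (univ : Finset V)) (i j : V) : Prop :=
  ∃ c ∈ P.parts, i ∈ c ∧ j ∈ c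

/-- The clique graph of the partition `P` with edge weight `k` (self loops included). -/
noncomputable def cliqueE {V : Type*} [Fintype V] [DecidableEq V]
    (P : Finpartition (univ : Finset V)) (k : ℝ) (i j : V) : ℝ :=
  if samePart P i j then k else 0

section Aux

variable {V : Type*} [Fintype V] [DecidableEq V] (P : Finpartition (univ : Finset V))

lemma samePart_refl (x : V) : samePart P x x := by
  obtain ⟨c, hc, hx⟩ := P.exists_mem (mem_univ x)
  exact ⟨c, hc, hx, hx⟩

lemma samePart_trans {x y z : V} (h1 : samePart P x y) (h2 : samePart P y z) :
    samePart P x z := by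
  obtain ⟨c, hc, hx, hy⟩ := h1
  obtain ⟨c', hc', hy', hz⟩ := h2
  exact ⟨c, hc, hx, (P.eq_of_mem_parts hc' hc hy' hy) ▸ hz⟩

lemma cliqueE_nonneg (x y : V) : 0 ≤ cliqueE P 1 x y := by
  unfold cliqueE; split <;> norm_num

lemma cliqueE_self (x : V) : cliqueE P 1 x x = 1 := by
  unfold cliqueE; rw [if_pos (samePart_refl P x)]

lemma vol_ge_one {c : Finset V} {x : V} (hx : x ∈ c) : 1 ≤ vol (cliqueE P 1) c := by
  have h1 : cliqueE P 1 x x ≤ ∑ j, cliqueE P 1 x j :=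
    single_le_sum (fun y _ => cliqueE_nonneg P x y) (mem_univ x)
  have h2 : ∑ j, cliqueE P 1 x j ≤ vol (cliqueE P 1) c :=
    single_le_sum (fun y _ => sum_nonneg fun z _ => cliqueE_nonneg P y z) hx
  rw [cliqueE_self] at h1
  linarith

end Aux

/-- Splitting a cluster that mixes two parts of `P` strictly increases the modularity
of a clustering of the clique graph of `P` with weight 1. -/
theorem split_mixed_cluster_increases_modularity
    {V : Type*} [Fintype V] [DecidableEq V]
    (P D : Finpartition (univ : Finset V)) (hP : P.parts ≠ {univ})
    (d : Finset V) (hd : d ∈ D.parts) (i j : V) (hi : i ∈ d) (hj : j ∈ d)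
    (hij : ¬ samePart P i j) :
    Qmod (cliqueE P 1)
        (D.parts.erase d ∪
          {d.filter (fun x => samePart P i x), d.filter (fun x => ¬ samePart P i x)}) >
      Qmod (cliqueE P 1) D.parts := by
  set E := cliqueE P 1 with hE
  set d1 := d.filter (fun x => samePart P i x) with hd1
  set d2 := d.filter (fun x => ¬ samePart P i x) with hd2
  have hi1 : i ∈ d1 := mem_filter.2 ⟨hi, samePart_refl P i⟩
  have hj2 : j ∈ d2 := mem_filter.2 ⟨hj, hij⟩
  have hdisj : Disjoint d1 d2 := disjoint_filter_filter_not d d _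
  have huni : d1 ∪ d2 = d := filter_union_filter_not_eq _ d
  -- cross edges are zero
  have hcross : ∀ x ∈ d1, ∀ y ∈ d2, E x y = 0 := by
    intro x hx y hy
    have hx' := (mem_filter.1 hx).2
    have hy' := (mem_filter.1 hy).2
    have : ¬ samePart P x y := fun h => hy' (samePart_trans P hx' h)
    simp [hE, cliqueE, this]
  have hcross' : ∀ x ∈ d2, ∀ y ∈ d1, E x y = 0 := by
    intro x hx y hy
    have hx' := (mem_filter.1 hx).2
    have hy' := (mem_filter.1 hy).2
    have : ¬ samePart P x y := by
      intro h
      exact hx' (samePart_trans P hy' ((⟨h.choose, h.choose_spec.1, h.choose_spec.2.2,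
        h.choose_spec.2.1⟩ : samePart P y x)))
    simp [hE, cliqueE, this]
  -- volumes
  have hvol : vol E d = vol E d1 + vol E d2 := by
    rw [vol, ← huni, sum_union hdisj]; rfl
  have hwin : win E d = win E d1 + win E d2 := by
    rw [win, ← huni, sum_union hdisj]
    have h1 : ∀ x ∈ d1, ∑ y ∈ d1 ∪ d2, E x y = ∑ y ∈ d1, E x y := by
      intro x hx
      rw [sum_union hdisj, sum_eq_zero (fun y hy => hcross x hx y hy), add_zero]
    have h2 : ∀ x ∈ d2, ∑ y ∈ d1 ∪ d2, E x y = ∑ y ∈ d2, E x y := by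
      intro x hx
      rw [sum_union hdisj, sum_eq_zero (fun y hy => hcross' x hx y hy), zero_add]
    rw [sum_congr rfl h1, sum_congr rfl h2]; rfl
  have hv1 : (0:ℝ) < vol E d1 := lt_of_lt_of_le one_pos (vol_ge_one P hi1)
  have hv2 : (0:ℝ) < vol E d2 := lt_of_lt_of_le one_pos (vol_ge_one P hj2)
  have hvV : (0:ℝ) < vol E univ := lt_of_lt_of_le one_pos (vol_ge_one P (mem_univ i))
  -- d1, d2 not in erase, d1 ≠ d2
  have hne12 : d1 ≠ d2 := by
    intro h
    have hi2 : i ∈ d2 := h ▸ hi1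
    exact (mem_filter.1 hi2).2 (samePart_refl P i)
  have hnotin : ∀ c ∈ D.parts.erase d, c ≠ d1 ∧ c ≠ d2 := by
    intro c hc
    have hcd : c ≠ d := (mem_erase.1 hc).1
    have hcp : c ∈ D.parts := (mem_erase.1 hc).2
    have hdis : Disjoint c d := D.disjoint hcp hd hcd
    constructor
    · rintro rfl
      exact (disjoint_left.1 hdis hi1) (filter_subset _ _ hi1)
    · rintro rfl
      exact (disjoint_left.1 hdis hj2) (filter_subset _ _ hj2)
  have h1nin : d1 ∉ D.parts.erase d := fun h => (hnotin d1 h).1 rfl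
  have h2nin : d2 ∉ D.parts.erase d := fun h => (hnotin d2 h).2 rfl
  set f : Finset V → ℝ := fun c => win E c / vol E univ - (vol E c / vol E univ) ^ 2 with hf
  have hQnew : Qmod E (D.parts.erase d ∪ {d1, d2}) =
      (∑ c ∈ D.parts.erase d, f c) + f d1 + f d2 := by
    rw [Qmod, sum_union (by
      rw [disjoint_right]
      intro c hc
      rcases mem_insert.1 hc with rfl | hc'
      · exact h1nin
      · rw [mem_singleton.1 hc']; exact h2nin)]
    rw [sum_pair hne12]
    ring
  have hQold : Qmod E D.parts = (∑ c ∈ D.parts.erase d, f c) + f d := by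
    rw [Qmod, ← sum_erase_add _ _ hd]
  rw [hQnew, hQold]
  have : f d < f d1 + f d2 := by
    rw [hf]
    simp only
    rw [hwin, hvol]
    have key : ((vol E d1 + vol E d2) / vol E univ) ^ 2 >
        (vol E d1 / vol E univ) ^ 2 + (vol E d2 / vol E univ) ^ 2 := by
      rw [div_pow, div_pow, div_pow, ← add_div, gt_iff_lt,
        div_lt_div_iff₀ (by positivity) (by positivity)]
      nlinarith [mul_pos (mul_pos hv1 hv2) (pow_pos hvV 2)]
    have : (win E d1 + win E d2) / vol E univ =
        win E d1 / vol E univ + win E d2 / vol E univ := add_div _ _ _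
    linarith
  linarith
end

section
/- Modularity is rich: for every finite node set V with |V| ≥ 1 and every partition C of V, there exists a symmetric weighted graph G on V such that C is the unique partition maximizing modularity Q(G,·). -/
open Finset
open scoped Classical

section Aux

variable {V : Type*} [Fintype V] [DecidableEq V]

lemma samePart_refl_s5 (P : Finpartition (univ : Finset V)) (i : V) : samePart P i i := by
  obtain ⟨c, hc, hi⟩ := P.exists_mem (mem_univ i)
  exact ⟨c, hc, hi, hi⟩

lemma samePart_symm {P : Finpartition (univ : Finset V)} {i j : V}
    (h : samePart P i j) : samePart P j i := by
  obtain ⟨c, hc, hi, hj⟩ := h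
  exact ⟨c, hc, hj, hi⟩

lemma mem_iff_samePart (P : Finpartition (univ : Finset V)) {c : Finset V}
    (hc : c ∈ P.parts) {i : V} (hi : i ∈ c) (j : V) : j ∈ c ↔ samePart P i j := by
  constructor
  · intro hj; exact ⟨c, hc, hi, hj⟩
  · rintro ⟨c', hc', hi', hj'⟩
    rwa [P.eq_of_mem_parts hc hc' hi hi']

lemma filter_samePart_eq (P : Finpartition (univ : Finset V)) {c : Finset V}
    (hc : c ∈ P.parts) {i : V} (hi : i ∈ c) :
    univ.filter (fun j => samePart P i j) = c := by
  ext j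
  simp [mem_iff_samePart P hc hi j]

lemma parts_mem_of_samePart {D C : Finpartition (univ : Finset V)}
    (h : ∀ i j, samePart D i j ↔ samePart C i j) {c : Finset V} (hc : c ∈ D.parts) :
    c ∈ C.parts := by
  obtain ⟨i, hi⟩ := D.nonempty_of_mem_parts hc
  obtain ⟨c', hc', hi'⟩ := C.exists_mem (mem_univ i)
  have hcc : c = c' := by
    ext j
    rw [mem_iff_samePart D hc hi j, mem_iff_samePart C hc' hi' j, h]
  rwa [hcc]

lemma finpartition_eq_of_samePart {D C : Finpartition (univ : Finset V)}
    (h : ∀ i j, samePart D i j ↔ samePart C i j) : D = C := by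
  apply Finpartition.ext
  ext c
  constructor
  · exact fun hc => parts_mem_of_samePart h hc
  · exact fun hc => parts_mem_of_samePart (fun i j => (h i j).symm) hc

lemma sum_parts_pairs (P : Finpartition (univ : Finset V)) (g : V → V → ℝ) :
    ∑ d ∈ P.parts, ∑ i ∈ d, ∑ j ∈ d, g i j
      = ∑ i, ∑ j, if samePart P i j then g i j else 0 := by
  have h1 : ∀ d ∈ P.parts, ∑ i ∈ d, ∑ j ∈ d, g i j
      = ∑ i ∈ d, ∑ j, if samePart P i j then g i j else 0 := by
    intro d hd
    refine Finset.sum_congr rfl fun i hi => ?_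
    rw [← Finset.sum_filter, filter_samePart_eq P hd hi]
  rw [Finset.sum_congr rfl h1]
  have h2 := Finset.sum_biUnion (s := P.parts) (t := id)
      (f := fun i => ∑ j, if samePart P i j then g i j else 0)
      P.supIndep.pairwiseDisjoint
  rw [P.biUnion_parts] at h2
  exact h2.symm

lemma Qmod_pair (E : V → V → ℝ) (P : Finpartition (univ : Finset V))
    (hS : vol E univ ≠ 0) :
    Qmod E P.parts = (∑ i, ∑ j, if samePart P i j then
        vol E univ * E i j - (∑ k, E i k) * (∑ k, E j k) else 0) / (vol E univ) ^ 2 := by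
  have key : ∀ d : Finset V, vol E univ * win E d - (vol E d) ^ 2
      = ∑ i ∈ d, ∑ j ∈ d, (vol E univ * E i j - (∑ k, E i k) * (∑ k, E j k)) := by
    intro d
    have h1 : vol E univ * win E d = ∑ i ∈ d, ∑ j ∈ d, vol E univ * E i j := by
      rw [win]
      simp [Finset.mul_sum]
    have h2 : (vol E d) ^ 2 = ∑ i ∈ d, ∑ j ∈ d, (∑ k, E i k) * (∑ k, E j k) := by
      rw [sq, vol, Finset.sum_mul_sum]
    rw [h1, h2, ← Finset.sum_sub_distrib]
    exact Finset.sum_congr rfl fun i _ => (Finset.sum_sub_distrib _ _).symm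
  rw [← sum_parts_pairs, Finset.sum_div, Qmod]
  refine Finset.sum_congr rfl fun d hd => ?_
  rw [← key d]
  field_simp

lemma Qmod_lt (E : V → V → ℝ) (C D : Finpartition (univ : Finset V))
    (hS : 0 < vol E univ)
    (H1 : ∀ i j, samePart C i j → i ≠ j →
        0 < vol E univ * E i j - (∑ k, E i k) * (∑ k, E j k))
    (H2 : ∀ i j, ¬ samePart C i j →
        vol E univ * E i j - (∑ k, E i k) * (∑ k, E j k) < 0)
    (hne : D ≠ C) : Qmod E D.parts < Qmod E C.parts := by
  set g : V → V → ℝ := fun i j => vol E univ * E i j - (∑ k, E i k) * (∑ k, E j k) with hg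
  rw [Qmod_pair E D hS.ne', Qmod_pair E C hS.ne']
  rw [div_lt_div_iff_of_pos_right (by positivity)]
  have hdiff : ∃ i j, ¬ (samePart D i j ↔ samePart C i j) := by
    by_contra h
    push_neg at h
    exact hne (finpartition_eq_of_samePart h)
  have hle : ∀ i j, (if samePart D i j then g i j else 0)
      ≤ (if samePart C i j then g i j else 0) := by
    intro i j
    by_cases hD : samePart D i j <;> by_cases hC : samePart C i j <;> simp [hD, hC]
    · exact (H2 i j hC).le
    · have hij : i ≠ j := by rintro rfl; exact hD (samePart_refl_s5 D i)
      exact (H1 i j hC hij).le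
  obtain ⟨i0, j0, hij0⟩ := hdiff
  have hlt0 : (if samePart D i0 j0 then g i0 j0 else 0)
      < (if samePart C i0 j0 then g i0 j0 else 0) := by
    by_cases hD : samePart D i0 j0 <;> by_cases hC : samePart C i0 j0
    · exact absurd (iff_of_true hD hC) hij0
    · rw [if_pos hD, if_neg hC]; exact H2 i0 j0 hC
    · have hij : i0 ≠ j0 := by rintro rfl; exact hD (samePart_refl_s5 D i0)
      rw [if_neg hD, if_pos hC]; exact H1 i0 j0 hC hij
    · exact absurd (iff_of_false hD hC) hij0
  refine Finset.sum_lt_sum (fun i _ => Finset.sum_le_sum fun j _ => hle i j)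
    ⟨i0, mem_univ i0, Finset.sum_lt_sum (fun j _ => hle i0 j) ⟨j0, mem_univ j0, hlt0⟩⟩

end Aux

/-- Modularity is rich: for every partition `C` of a nonempty finite node set `V`
there is a symmetric nonnegatively weighted graph on `V` for which `C` is the
unique modularity-maximizing partition. -/
theorem modularity_is_rich
    {V : Type*} [Fintype V] [DecidableEq V] [Nonempty V]
    (C : Finpartition (univ : Finset V)) :
    ∃ E : V → V → ℝ, (∀ i j, 0 ≤ E i j) ∧ (∀ i j, E i j = E j i) ∧
      ∀ D : Finpartition (univ : Finset V), D ≠ C → Qmod E D.parts < Qmod E C.parts := by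
  by_cases hC : C.parts = {univ}
  · -- the trivial partition: use the complete graph without self loops
    refine ⟨fun i j => if i = j then 0 else 1,
      fun i j => by dsimp only; split <;> norm_num,
      fun i j => by simp [eq_comm], ?_⟩
    intro D hne
    set E : V → V → ℝ := fun i j => if i = j then 0 else 1 with hE
    have hCall : ∀ i j, samePart C i j := by
      intro i j
      exact ⟨univ, by rw [hC]; exact mem_singleton_self _, mem_univ i, mem_univ j⟩
    -- D ≠ C gives two distinct elements
    have hdiff : ∃ i j, ¬ (samePart D i j ↔ samePart C i j) := by
      by_contra h
      push_neg at h
      exact hne (finpartition_eq_of_samePart h)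
    obtain ⟨i0, j0, hij0⟩ := hdiff
    have hD0 : ¬ samePart D i0 j0 := by
      intro h; exact hij0 (iff_of_true h (hCall i0 j0))
    have hij : i0 ≠ j0 := by rintro rfl; exact hD0 (samePart_refl_s5 D i0)
    set n : ℝ := (Fintype.card V : ℝ) with hn
    have hn2 : (2 : ℝ) ≤ n := by
      have : Nontrivial V := ⟨i0, j0, hij⟩
      have h2 : 2 ≤ Fintype.card V := Fintype.one_lt_card (α := V)
      rw [hn]; exact_mod_cast h2
    have hdeg : ∀ i : V, ∑ k, E i k = n - 1 := by
      intro i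
      have : ∀ k, E i k = 1 - (if i = k then (1 : ℝ) else 0) := by
        intro k; rw [hE]; dsimp only; split <;> ring
      rw [Finset.sum_congr rfl fun k _ => this k, Finset.sum_sub_distrib,
        Finset.sum_const, Finset.sum_ite_eq]
      simp [hn, card_univ, mul_comm]
    have hvol : vol E univ = n * (n - 1) := by
      rw [vol, Finset.sum_congr rfl fun i _ => hdeg i, Finset.sum_const, card_univ,
        nsmul_eq_mul]
    have hS : 0 < vol E univ := by rw [hvol]; nlinarith
    refine Qmod_lt E C D hS ?_ ?_ hne
    · intro i j _ hijne
      rw [hvol, hdeg, hdeg]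
      have : E i j = 1 := by rw [hE]; simp [hijne]
      rw [this]
      nlinarith
    · intro i j h
      exact absurd (hCall i j) h
  · -- nontrivial partition: use the clique graph with weight 1
    refine ⟨cliqueE C 1,
      fun i j => by rw [cliqueE]; split <;> norm_num,
      fun i j => ?_, ?_⟩
    · rw [cliqueE, cliqueE]
      by_cases h : samePart C i j
      · rw [if_pos h, if_pos (samePart_symm h)]
      · rw [if_neg h, if_neg (fun h' => h (samePart_symm h'))]
    intro D hne
    set E : V → V → ℝ := cliqueE C 1 with hE
    have hdeg : ∀ i : V, ∑ k, E i k = ((C.part i).card : ℝ) := by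
      intro i
      have : ∑ k, E i k = ∑ k, if samePart C i k then (1 : ℝ) else 0 := rfl
      rw [this, Finset.sum_boole,
        filter_samePart_eq C (C.part_mem.mpr (mem_univ i)) (C.mem_part (mem_univ i))]
    have hdegpos : ∀ i : V, 0 < ∑ k, E i k := by
      intro i
      rw [hdeg]
      have := C.nonempty_of_mem_parts (C.part_mem.mpr (mem_univ i))
      exact_mod_cast Finset.card_pos.mpr this
    have hvolS : vol E univ = ∑ i, ∑ k, E i k := rfl
    have hS : 0 < vol E univ := by
      rw [hvolS]
      exact Finset.sum_pos (fun i _ => hdegpos i) univ_nonempty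
    refine Qmod_lt E C D hS ?_ ?_ hne
    · rintro i j ⟨c, hc, hi, hj⟩ _
      have hEij : E i j = 1 := by
        rw [hE, cliqueE, if_pos ⟨c, hc, hi, hj⟩]
      rw [hEij, mul_one, sub_pos, hdeg, hdeg, C.part_eq_of_mem hc hi,
        C.part_eq_of_mem hc hj]
      -- (c.card : ℝ) * c.card < vol E univ
      have hsum : ∑ i' ∈ c, ∑ k, E i' k = (c.card : ℝ) * (c.card : ℝ) := by
        have : ∀ i' ∈ c, ∑ k, E i' k = ((c.card : ℝ)) := by
          intro i' hi'
          rw [hdeg, C.part_eq_of_mem hc hi']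
        rw [Finset.sum_congr rfl this, Finset.sum_const]
        simp [mul_comm]
      rw [hvolS, ← hsum]
      -- c ≠ univ
      have hcne : c ≠ univ := by
        intro hcu
        apply hC
        ext d
        constructor
        · intro hd
          obtain ⟨y, hy⟩ := C.nonempty_of_mem_parts hd
          have : d = c := C.eq_of_mem_parts hd hc hy (hcu ▸ mem_univ y)
          rw [mem_singleton, this, hcu]
        · intro hd
          rw [mem_singleton] at hd
          rw [← hcu] at hd
          rw [hd]
          exact hc
      obtain ⟨x, _, hxc⟩ := Finset.exists_of_ssubset (Finset.ssubset_univ_iff.mpr hcne)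
      exact Finset.sum_lt_sum_of_subset (subset_univ c) (mem_univ x) hxc (hdegpos x)
        (fun k _ _ => (hdegpos k).le)
    · intro i j h
      have hEij : E i j = 0 := by rw [hE, cliqueE, if_neg h]
      rw [hEij, mul_zero, zero_sub]
      exact neg_neg_of_pos (mul_pos (hdegpos i) (hdegpos j))
end

section
/- Let G be the clique graph of a partition C (of a finite set V) with weight k > 0, and let 0 < β < 1. Then \sum_{d∈D}(w_d/v_d - β) = (1-β)|C| when D = C, while for any partition D ≠ C, \sum_{d∈D}(w_d/v_d - β) < (1-β)|C| - ε, where ε = min(β, 1-β, 1/|V|)/2. -/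
open Finset
open scoped Classical

section Helpers

variable {V : Type*} [Fintype V] [DecidableEq V]

lemma part_grouping (P : Finpartition (univ : Finset V)) (s : Finset V) (f : V → ℝ) :
    ∑ i ∈ s, f i = ∑ p ∈ P.parts, ∑ i ∈ p ∩ s, f i := by
  have h1 : ∀ p : Finset V, ∑ i ∈ p ∩ s, f i = ∑ i ∈ s, if i ∈ p then f i else 0 := by
    intro p
    rw [inter_comm, ← Finset.filter_mem_eq_inter, Finset.sum_filter]
  simp_rw [h1]
  rw [Finset.sum_comm]
  refine (Finset.sum_congr rfl fun i _ => ?_).symm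
  rw [Finset.sum_eq_single (P.part i)]
  · simp [P.mem_part (mem_univ i)]
  · intro p hp hne
    rw [if_neg fun hip => hne (P.part_eq_of_mem hp hip).symm]
  · intro h; exact absurd (P.part_mem.2 (mem_univ i)) h

lemma card_grouping (P : Finpartition (univ : Finset V)) (s : Finset V) :
    ∑ p ∈ P.parts, ((p ∩ s).card : ℝ) = s.card := by
  have := part_grouping P s (fun _ => (1 : ℝ))
  simpa using this.symm

lemma row_sum (P : Finpartition (univ : Finset V)) (k : ℝ) (i : V) (d : Finset V) :
    ∑ j ∈ d, cliqueE P k i j = k * ((P.part i) ∩ d).card := by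
  have h : ∀ j, cliqueE P k i j = if j ∈ P.part i then k else 0 := by
    intro j
    unfold cliqueE
    by_cases hj : j ∈ P.part i
    · rw [if_pos hj, if_pos ⟨P.part i, P.part_mem.2 (mem_univ i), P.mem_part (mem_univ i), hj⟩]
    · rw [if_neg hj, if_neg]
      rintro ⟨c, hc, hic, hjc⟩
      exact hj ((P.part_eq_of_mem hc hic) ▸ hjc)
  simp_rw [h]
  rw [← Finset.sum_filter, Finset.sum_const, Finset.filter_mem_eq_inter, inter_comm,
    nsmul_eq_mul, mul_comm]

lemma win_eq (P : Finpartition (univ : Finset V)) (k : ℝ) (d : Finset V) :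
    win (cliqueE P k) d = k * ∑ c ∈ P.parts, ((c ∩ d).card : ℝ) ^ 2 := by
  unfold win
  rw [Finset.sum_congr rfl fun i _ => row_sum P k i d,
    part_grouping P d (fun i => k * ((P.part i) ∩ d).card), Finset.mul_sum]
  refine Finset.sum_congr rfl fun c hc => ?_
  rw [Finset.sum_congr rfl fun i hi =>
    (by rw [P.part_eq_of_mem hc (Finset.mem_inter.1 hi).1] :
      k * (((P.part i) ∩ d).card : ℝ) = k * ((c ∩ d).card : ℝ)),
    Finset.sum_const, nsmul_eq_mul]
  ring

lemma vol_eq (P : Finpartition (univ : Finset V)) (k : ℝ) (d : Finset V) :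
    vol (cliqueE P k) d = k * ∑ c ∈ P.parts, ((c ∩ d).card : ℝ) * c.card := by
  unfold vol
  rw [Finset.sum_congr rfl fun i _ => row_sum P k i univ,
    part_grouping P d (fun i => k * ((P.part i) ∩ univ).card), Finset.mul_sum]
  refine Finset.sum_congr rfl fun c hc => ?_
  rw [Finset.sum_congr rfl fun i hi =>
    (by rw [P.part_eq_of_mem hc (Finset.mem_inter.1 hi).1] :
      k * (((P.part i) ∩ univ).card : ℝ) = k * ((c ∩ univ).card : ℝ)),
    Finset.sum_const, nsmul_eq_mul, inter_univ]
  ring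

end Helpers

/-- On the clique graph of `C` with weight `k > 0` and `0 < β < 1`:
the sum `∑_{d∈D}(w_d/v_d - β)` equals `(1-β)|C|` when `D = C`, and is less than
`(1-β)|C| - ε` for every partition `D ≠ C`, where `ε = min(β, 1-β, 1/|V|)/2`. -/
theorem clique_graph_sum_gap
    {V : Type*} [Fintype V] [DecidableEq V] [Nonempty V]
    (C : Finpartition (univ : Finset V))
    (k β : ℝ) (hk : 0 < k) (hβ0 : 0 < β) (hβ1 : β < 1) :
    (∑ d ∈ C.parts, (win (cliqueE C k) d / vol (cliqueE C k) d - β))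
        = (1 - β) * C.parts.card ∧
    ∀ D : Finpartition (univ : Finset V), D ≠ C →
      (∑ d ∈ D.parts, (win (cliqueE C k) d / vol (cliqueE C k) d - β))
        < (1 - β) * C.parts.card
            - min β (min (1 - β) (1 / (Fintype.card V : ℝ))) / 2 := by
  classical
  have hNpos : (0:ℝ) < (Fintype.card V : ℝ) := by exact_mod_cast Fintype.card_pos
  set ε := min β (min (1 - β) (1 / (Fintype.card V : ℝ))) / 2 with hεdef
  have hεβ : ε < β := by
    have h1 : min β (min (1 - β) (1 / (Fintype.card V : ℝ))) ≤ β := min_le_left _ _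
    rw [hεdef]; linarith
  have hε1β : ε < 1 - β := by
    have h1 : min β (min (1 - β) (1 / (Fintype.card V : ℝ))) ≤ 1 - β :=
      le_trans (min_le_right _ _) (min_le_left _ _)
    rw [hεdef]; linarith
  have hεN : ε < 1 / (Fintype.card V : ℝ) := by
    have h1 : min β (min (1 - β) (1 / (Fintype.card V : ℝ))) ≤ 1 / (Fintype.card V : ℝ) :=
      le_trans (min_le_right _ _) (min_le_right _ _)
    have h2 : (0:ℝ) < 1 / (Fintype.card V : ℝ) := by positivity
    rw [hεdef]; linarith
  have hVpos : ∀ d : Finset V, d.Nonempty →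
      0 < ∑ c ∈ C.parts, ((c ∩ d).card : ℝ) * c.card := by
    intro d hd
    have h1 : (d.card : ℝ) ≤ ∑ c ∈ C.parts, ((c ∩ d).card : ℝ) * c.card := by
      rw [← card_grouping C d]
      refine Finset.sum_le_sum fun c hc => ?_
      have hc1 : (1:ℝ) ≤ c.card := by
        exact_mod_cast (C.nonempty_of_mem_parts hc).card_pos
      nlinarith [Nat.cast_nonneg (α := ℝ) (c ∩ d).card]
    have h2 : (0:ℝ) < d.card := by exact_mod_cast hd.card_pos
    linarith
  have hratio : ∀ d : Finset V, win (cliqueE C k) d / vol (cliqueE C k) d =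
      (∑ c ∈ C.parts, ((c ∩ d).card : ℝ) ^ 2) /
      (∑ c ∈ C.parts, ((c ∩ d).card : ℝ) * c.card) := by
    intro d
    rw [win_eq, vol_eq, mul_div_mul_left _ _ (ne_of_gt hk)]
  have hWV : ∀ d : Finset V, (∑ c ∈ C.parts, ((c ∩ d).card : ℝ) ^ 2) ≤
      ∑ c ∈ C.parts, ((c ∩ d).card : ℝ) * c.card := by
    intro d
    refine Finset.sum_le_sum fun c hc => ?_
    have h1 : ((c ∩ d).card : ℝ) ≤ c.card := by
      exact_mod_cast Finset.card_le_card (inter_subset_left)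
    nlinarith [Nat.cast_nonneg (α := ℝ) (c ∩ d).card]
  have hle1 : ∀ d : Finset V, d.Nonempty → win (cliqueE C k) d / vol (cliqueE C k) d ≤ 1 := by
    intro d hd
    rw [hratio d]
    exact (div_le_one (hVpos d hd)).2 (hWV d)
  constructor
  · have hdiag : ∀ c ∈ C.parts, win (cliqueE C k) c / vol (cliqueE C k) c = 1 := by
      intro c hc
      have hcpos : (0:ℝ) < c.card := by
        exact_mod_cast (C.nonempty_of_mem_parts hc).card_pos
      have haux : ∀ c' ∈ C.parts, c' ≠ c → ((c' ∩ c).card : ℝ) = 0 := by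
        intro c' hc' hne
        have hdisj : Disjoint c' c :=
          C.disjoint (Finset.mem_coe.2 hc') (Finset.mem_coe.2 hc) hne
        rw [Finset.disjoint_iff_inter_eq_empty.1 hdisj]; simp
      have hW : (∑ c' ∈ C.parts, ((c' ∩ c).card : ℝ) ^ 2) = (c.card : ℝ) ^ 2 := by
        rw [Finset.sum_eq_single c (fun c' hc' hne => by rw [haux c' hc' hne]; ring)
          (fun h => absurd hc h), inter_self]
      have hV : (∑ c' ∈ C.parts, ((c' ∩ c).card : ℝ) * c'.card) = (c.card : ℝ) ^ 2 := by
        rw [Finset.sum_eq_single c (fun c' hc' hne => by rw [haux c' hc' hne]; ring)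
          (fun h => absurd hc h), inter_self]
        ring
      rw [hratio c, hW, hV, div_self (by positivity)]
    rw [Finset.sum_congr rfl fun c hc => by rw [hdiag c hc]]
    rw [Finset.sum_const, nsmul_eq_mul]
    ring
  · intro D hD
    have hterm : ∀ d ∈ D.parts, win (cliqueE C k) d / vol (cliqueE C k) d - β ≤ 1 - β :=
      fun d hd => by linarith [hle1 d (D.nonempty_of_mem_parts hd)]
    rcases lt_trichotomy D.parts.card C.parts.card with hn | hn | hn
    · -- fewer parts than C
      have h1 : ∑ d ∈ D.parts, (win (cliqueE C k) d / vol (cliqueE C k) d - β)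
          ≤ (D.parts.card : ℝ) * (1 - β) := by
        calc ∑ d ∈ D.parts, (win (cliqueE C k) d / vol (cliqueE C k) d - β)
            ≤ ∑ _d ∈ D.parts, (1 - β) := Finset.sum_le_sum hterm
          _ = (D.parts.card : ℝ) * (1 - β) := by rw [Finset.sum_const, nsmul_eq_mul]
      have h2 : (D.parts.card : ℝ) ≤ (C.parts.card : ℝ) - 1 := by
        have : (D.parts.card : ℝ) + 1 ≤ C.parts.card := by exact_mod_cast hn
        linarith
      nlinarith
    · -- same number of parts: some part of D contains no part of C
      have hclaim : ∃ d₀ ∈ D.parts, ∀ c ∈ C.parts, ¬ c ⊆ d₀ := by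
        by_contra h
        push_neg at h
        choose! φ hφ1 hφ2 using h
        have hinj : Set.InjOn φ D.parts := by
          intro d1 h1 d2 h2 heq
          obtain ⟨x, hx⟩ := C.nonempty_of_mem_parts (hφ1 d1 h1)
          exact D.eq_of_mem_parts h1 h2 (hφ2 d1 h1 hx) (hφ2 d2 h2 (heq ▸ hx))
        have himg : D.parts.image φ = C.parts := by
          apply Finset.eq_of_subset_of_card_le
          · intro c hc
            obtain ⟨d, hd, rfl⟩ := Finset.mem_image.1 hc
            exact hφ1 d hd
          · rw [Finset.card_image_of_injOn hinj, hn]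
        have hsum1 : ∑ d ∈ D.parts, (φ d).card = ∑ c ∈ C.parts, c.card := by
          rw [← himg, Finset.sum_image (fun a ha b hb => hinj ha hb)]
        have hsum2 : ∑ d ∈ D.parts, d.card = ∑ c ∈ C.parts, c.card := by
          rw [D.sum_card_parts, C.sum_card_parts]
        have hcle : ∀ d ∈ D.parts, (φ d).card ≤ d.card :=
          fun d hd => Finset.card_le_card (hφ2 d hd)
        have heq := (Finset.sum_eq_sum_iff_of_le hcle).1 (hsum1.trans hsum2.symm)
        have hφeq : ∀ d ∈ D.parts, φ d = d := fun d hd =>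
          Finset.eq_of_subset_of_card_le (hφ2 d hd) (heq d hd).ge
        have : D.parts = C.parts := by
          rw [← himg, Finset.image_congr (fun d hd => hφeq d hd)]
          exact Finset.image_id'.symm
        exact hD (Finpartition.ext this)
      obtain ⟨d₀, hd₀, hd₀sub⟩ := hclaim
      have hspecial : win (cliqueE C k) d₀ / vol (cliqueE C k) d₀
          ≤ 1 - 1 / (Fintype.card V : ℝ) := by
        rw [hratio d₀, div_le_iff₀ (hVpos d₀ (D.nonempty_of_mem_parts hd₀))]
        rw [Finset.mul_sum]
        refine Finset.sum_le_sum fun c hc => ?_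
        have hx0 : (0:ℝ) ≤ ((c ∩ d₀).card : ℝ) := Nat.cast_nonneg _
        have hxa : ((c ∩ d₀).card : ℝ) + 1 ≤ c.card := by
          have hss : c ∩ d₀ ⊂ c := by
            refine Finset.ssubset_iff_subset_ne.2 ⟨inter_subset_left, fun h => ?_⟩
            exact hd₀sub c hc (by rw [← h]; exact inter_subset_right)
          have := Finset.card_lt_card hss
          exact_mod_cast this
        have haN : (c.card : ℝ) ≤ Fintype.card V := by
          exact_mod_cast Finset.card_le_card (Finset.subset_univ c) |>.trans
            (le_of_eq (Finset.card_univ))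
        have h1 : ((c ∩ d₀).card : ℝ) * c.card / (Fintype.card V : ℝ)
            ≤ ((c ∩ d₀).card : ℝ) := by
          rw [div_le_iff₀ hNpos]
          nlinarith
        have h2 : ((c ∩ d₀).card : ℝ) ^ 2 ≤ ((c ∩ d₀).card : ℝ) * ((c.card : ℝ) - 1) := by
          nlinarith
        have h3 : (1 - 1 / (Fintype.card V : ℝ)) * (((c ∩ d₀).card : ℝ) * c.card)
            = ((c ∩ d₀).card : ℝ) * c.card - ((c ∩ d₀).card : ℝ) * c.card /
              (Fintype.card V : ℝ) := by ring
        rw [h3]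
        linarith
      have hsplit : ∑ d ∈ D.parts, (win (cliqueE C k) d / vol (cliqueE C k) d - β)
          = (win (cliqueE C k) d₀ / vol (cliqueE C k) d₀ - β)
            + ∑ d ∈ D.parts.erase d₀, (win (cliqueE C k) d / vol (cliqueE C k) d - β) :=
        (Finset.add_sum_erase _ _ hd₀).symm
      have hrest : ∑ d ∈ D.parts.erase d₀, (win (cliqueE C k) d / vol (cliqueE C k) d - β)
          ≤ ((D.parts.card : ℝ) - 1) * (1 - β) := by
        calc ∑ d ∈ D.parts.erase d₀, (win (cliqueE C k) d / vol (cliqueE C k) d - β)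
            ≤ ∑ _d ∈ D.parts.erase d₀, (1 - β) :=
              Finset.sum_le_sum fun d hd => hterm d (Finset.mem_of_mem_erase hd)
          _ = ((D.parts.erase d₀).card : ℝ) * (1 - β) := by
              rw [Finset.sum_const, nsmul_eq_mul]
          _ = ((D.parts.card : ℝ) - 1) * (1 - β) := by
              rw [Finset.card_erase_of_mem hd₀]
              have h1 : 1 ≤ D.parts.card := Finset.card_pos.2 ⟨d₀, hd₀⟩
              rw [Nat.cast_sub h1, Nat.cast_one]
      have hcast : (D.parts.card : ℝ) = C.parts.card := by exact_mod_cast hn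
      rw [hcast] at hrest
      rw [hsplit]
      linarith
    · -- more parts than C
      have hg : ∀ d ∈ D.parts, win (cliqueE C k) d / vol (cliqueE C k) d
          ≤ ∑ c ∈ C.parts, ((c ∩ d).card : ℝ) / c.card := by
        intro d hd
        rw [hratio d, div_le_iff₀ (hVpos d (D.nonempty_of_mem_parts hd))]
        rw [Finset.sum_mul]
        refine Finset.sum_le_sum fun c hc => ?_
        have hc0 : (0:ℝ) < c.card := by
          exact_mod_cast (C.nonempty_of_mem_parts hc).card_pos
        have hterm' : ((c ∩ d).card : ℝ) * c.card
            ≤ ∑ c' ∈ C.parts, ((c' ∩ d).card : ℝ) * c'.card :=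
          Finset.single_le_sum (f := fun c' => ((c' ∩ d).card : ℝ) * c'.card)
            (fun c' _ => by positivity) hc
        calc ((c ∩ d).card : ℝ) ^ 2
            = ((c ∩ d).card : ℝ) / c.card * (((c ∩ d).card : ℝ) * c.card) := by
              field_simp
          _ ≤ ((c ∩ d).card : ℝ) / c.card *
              (∑ c' ∈ C.parts, ((c' ∩ d).card : ℝ) * c'.card) := by
              exact mul_le_mul_of_nonneg_left hterm' (by positivity)
      have hgsum : ∑ d ∈ D.parts, ∑ c ∈ C.parts, ((c ∩ d).card : ℝ) / c.card
          = C.parts.card := by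
        rw [Finset.sum_comm]
        have hinner : ∀ c ∈ C.parts, ∑ d ∈ D.parts, ((c ∩ d).card : ℝ) / c.card = 1 := by
          intro c hc
          have hc0 : ((c.card : ℝ)) ≠ 0 := by
            have : (0:ℝ) < c.card := by
              exact_mod_cast (C.nonempty_of_mem_parts hc).card_pos
            linarith
          rw [← Finset.sum_div]
          have h1 : ∑ d ∈ D.parts, ((c ∩ d).card : ℝ) = c.card := by
            rw [Finset.sum_congr rfl fun d _ => by rw [inter_comm]]
            exact card_grouping D c
          rw [h1, div_self hc0]
        rw [Finset.sum_congr rfl hinner, Finset.sum_const, nsmul_eq_mul, mul_one]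
      have h1 : ∑ d ∈ D.parts, (win (cliqueE C k) d / vol (cliqueE C k) d - β)
          ≤ (C.parts.card : ℝ) - β * D.parts.card := by
        calc ∑ d ∈ D.parts, (win (cliqueE C k) d / vol (cliqueE C k) d - β)
            ≤ ∑ d ∈ D.parts, ((∑ c ∈ C.parts, ((c ∩ d).card : ℝ) / c.card) - β) :=
              Finset.sum_le_sum fun d hd => by linarith [hg d hd]
          _ = (C.parts.card : ℝ) - β * D.parts.card := by
              rw [Finset.sum_sub_distrib, hgsum, Finset.sum_const, nsmul_eq_mul]
              ring
      have h2 : (C.parts.card : ℝ) + 1 ≤ (D.parts.card : ℝ) := by exact_mod_cast hn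
      nlinarith
end

section
/- Adaptive scale modularity Q_{M,γ}(G,C) = \sum_{c∈C}(w_c/(M+γv_c) - (v_c/(M+γv_c))²) is rich for all M ≥ 0 and γ > 1: for every finite set V and every partition C of V, choosing the clique graph G of C with sufficiently large weight k (specifically k > 3|V|β²M/ε with β = 1/γ and ε = min(β,1-β,1/|V|)/2), C is the unique maximizer of Q_{M,γ}(G,·). -/
open Finset
open scoped Classical

/-- Adaptive scale modularity with parameters `M` and `γ`. -/
noncomputable def Qasm {V : Type*} [Fintype V] (E : V → V → ℝ) (M γ : ℝ)
    (C : Finset (Finset V)) : ℝ :=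
  ∑ c ∈ C, (win E c / (M + γ * vol E c) - (vol E c / (M + γ * vol E c)) ^ 2)

noncomputable def Tterm (M γ w v : ℝ) : ℝ :=
  w / (M + γ * v) - (v / (M + γ * v)) ^ 2

section analysisAux


section analysis
variable {M γ k N : ℝ}
variable (hM : 0 ≤ M) (hγ : 1 < γ) (hk : 0 < k) (hN : 1 ≤ N)
variable (HΔ : 2 * (γ + 1) * N * M < (γ - 1) * (γ * k))

include hγ hk hN HΔ in
lemma delta_gamma : 2 * (γ + 1) * N * (M / (γ * k)) < γ - 1 := by
  have hγk : (0:ℝ) < γ * k := by positivity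
  have key : (2 * (γ + 1) * N * (M / (γ * k))) * (γ * k) < (γ - 1) * (γ * k) := by
    calc (2 * (γ + 1) * N * (M / (γ * k))) * (γ * k) = 2 * (γ + 1) * N * M := by
          field_simp
    _ < (γ - 1) * (γ * k) := HΔ
  exact lt_of_mul_lt_mul_right key hγk.le

include hM hγ hk hN HΔ in
lemma delta_small : 2 * N * (M / (γ * k)) < 1 := by
  have h := delta_gamma hγ hk hN HΔ
  have hδ0 : 0 ≤ M / (γ * k) := by positivity
  nlinarith

set_option maxHeartbeats 1000000 in
include hM hγ hk hN HΔ in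
lemma caseI (a n : ℝ) (ha : 1 ≤ a) (han : a + 1 ≤ n) (hnN : n ≤ N) :
    Tterm M γ (k * a ^ 2) (k * (a * n)) < (a / n) * Tterm M γ (k * n ^ 2) (k * n ^ 2) := by
  have hγ0 : (0:ℝ) < γ := by linarith
  have hn0 : (0:ℝ) < n := by linarith
  have ha0 : (0:ℝ) < a := by linarith
  have hNpos : (0:ℝ) < N := by linarith
  have hv1 : (0:ℝ) < k * (a * n) := by positivity
  have hv2 : (0:ℝ) < k * n ^ 2 := by positivity
  have hD1 : (0:ℝ) < M + γ * (k * (a * n)) := by positivity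
  have hD2 : (0:ℝ) < M + γ * (k * n ^ 2) := by positivity
  set δ : ℝ := M / (γ * k) with hδdef
  have hδ0 : 0 ≤ δ := by positivity
  have hδN : 2 * N * δ < 1 := delta_small hM hγ hk hN HΔ
  have hδhalf : δ < 1 := by nlinarith
  -- lower bound for y1 = v1/D1
  have hkey0 : δ * (γ * (k * (a * n))) = M * (a * n) := by
    rw [hδdef]; field_simp
  have hkey : M ≤ δ * M + δ * (γ * (k * (a * n))) := by
    rw [hkey0]
    nlinarith [mul_nonneg hM (sub_nonneg.2 (show (1:ℝ) ≤ a * n by nlinarith))]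
  have hy1 : (1 - δ) / γ ≤ (k * (a * n)) / (M + γ * (k * (a * n))) := by
    rw [div_le_div_iff₀ hγ0 hD1]
    nlinarith
  have hy1nonneg : 0 ≤ (1 - δ) / γ := by
    apply div_nonneg <;> linarith
  have hy2 : (k * n ^ 2) / (M + γ * (k * n ^ 2)) ≤ 1 / γ := by
    rw [div_le_div_iff₀ hD2 hγ0]
    nlinarith
  have hy2nonneg : 0 ≤ (k * n ^ 2) / (M + γ * (k * n ^ 2)) := by positivity
  -- P1 ≥ 0
  have hP1 : (a / n) * ((k * n ^ 2) / (M + γ * (k * n ^ 2)))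
      - (k * a ^ 2) / (M + γ * (k * (a * n)))
      = k * a * M * (n - a) / ((M + γ * (k * (a * n))) * (M + γ * (k * n ^ 2))) := by
    field_simp
    ring
  have hP1pos : 0 ≤ (a / n) * ((k * n ^ 2) / (M + γ * (k * n ^ 2)))
      - (k * a ^ 2) / (M + γ * (k * (a * n))) := by
    rw [hP1]
    have : (0:ℝ) ≤ n - a := by linarith
    positivity
  -- P2 > 0
  have hy1sq : ((1 - δ) / γ) ^ 2 ≤ ((k * (a * n)) / (M + γ * (k * (a * n)))) ^ 2 :=
    pow_le_pow_left₀ hy1nonneg hy1 2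
  have hy2sq : ((k * n ^ 2) / (M + γ * (k * n ^ 2))) ^ 2 ≤ (1 / γ) ^ 2 :=
    pow_le_pow_left₀ hy2nonneg hy2 2
  have han' : a / n ≤ 1 - 1 / N := by
    rw [div_le_iff₀ hn0]
    have h1n : 1 / N * n ≤ 1 := by
      rw [div_mul_eq_mul_div, one_mul, div_le_one hNpos]
      exact hnN
    have hexpand : (1 - 1/N) * n = n - 1/N * n := by ring
    linarith
  have h1N : 1/N ≤ 1 := by rw [div_le_one hNpos]; exact hN
  have hb1 : (a / n) * ((k * n ^ 2) / (M + γ * (k * n ^ 2))) ^ 2 ≤ (1 - 1/N) * (1/γ)^2 := by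
    apply mul_le_mul han' hy2sq (by positivity) (by linarith)
  have hb3 : (1 - 1/N) * (1/γ)^2 < ((1 - δ)/γ)^2 := by
    have h2δ : 2*δ < 1/N := by
      rw [lt_div_iff₀ hNpos]; nlinarith
    have hexp : ((1 - δ)/γ)^2 = (1 - 2*δ + δ^2) * (1/γ)^2 := by ring
    rw [hexp]
    have hg2 : (0:ℝ) < (1/γ)^2 := by positivity
    apply mul_lt_mul_of_pos_right _ hg2
    nlinarith [sq_nonneg δ]
  have hP2pos : 0 < ((k * (a * n)) / (M + γ * (k * (a * n)))) ^ 2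
      - (a / n) * ((k * n ^ 2) / (M + γ * (k * n ^ 2))) ^ 2 := by
    linarith
  have decomp : (a / n) * Tterm M γ (k * n ^ 2) (k * n ^ 2) - Tterm M γ (k * a ^ 2) (k * (a * n))
      = ((a / n) * ((k * n ^ 2) / (M + γ * (k * n ^ 2)))
          - (k * a ^ 2) / (M + γ * (k * (a * n))))
        + (((k * (a * n)) / (M + γ * (k * (a * n)))) ^ 2
          - (a / n) * ((k * n ^ 2) / (M + γ * (k * n ^ 2))) ^ 2) := by
    unfold Tterm; ring
  linarith

end analysis

section analysis2
variable {M γ k N : ℝ}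
variable (hM : 0 ≤ M) (hγ : 1 < γ) (hk : 0 < k) (hN : 1 ≤ N)
variable (HΔ : 2 * (γ + 1) * N * M < (γ - 1) * (γ * k))

include hγ hk hN HΔ in
lemma delta_main : 2 * (γ + 1) * (M / (γ * k)) < (γ - 1) / N := by
  have hN0 : (0:ℝ) < N := by linarith
  have h := delta_gamma hγ hk hN HΔ
  rw [lt_div_iff₀ hN0]
  calc 2 * (γ + 1) * (M / (γ * k)) * N = 2 * (γ + 1) * N * (M / (γ * k)) := by ring
  _ < γ - 1 := h

set_option maxHeartbeats 1000000 in
include hM hγ hk hN HΔ in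
lemma caseII {ι : Type*} [DecidableEq ι] (S : Finset ι) (a n : ι → ℝ) (hS : 2 ≤ S.card)
    (ha : ∀ c ∈ S, 1 ≤ a c) (han : ∀ c ∈ S, a c ≤ n c) (hnN : ∀ c ∈ S, n c ≤ N) :
    Tterm M γ (k * ∑ c ∈ S, (a c) ^ 2) (k * ∑ c ∈ S, a c * n c)
      < ∑ c ∈ S, (a c / n c) * Tterm M γ (k * (n c) ^ 2) (k * (n c) ^ 2) := by
  have hγ0 : (0:ℝ) < γ := by linarith
  have hNpos : (0:ℝ) < N := by linarith
  set δ : ℝ := M / (γ * k) with hδdef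
  have hδ0 : 0 ≤ δ := by positivity
  have hδN : 2 * N * δ < 1 := delta_small hM hγ hk hN HΔ
  have hδmain : 2 * (γ + 1) * δ < (γ - 1) / N := delta_main hγ hk hN HΔ
  have hn1 : ∀ c ∈ S, 1 ≤ n c := fun c hc => le_trans (ha c hc) (han c hc)
  have hn0 : ∀ c ∈ S, (0:ℝ) < n c := fun c hc => by linarith [hn1 c hc]
  have ha0 : ∀ c ∈ S, (0:ℝ) < a c := fun c hc => by linarith [ha c hc]
  have hne : S.Nonempty := Finset.card_pos.1 (by omega)
  set W : ℝ := ∑ c ∈ S, (a c) ^ 2 with hWdef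
  set Vv : ℝ := ∑ c ∈ S, a c * n c with hVdef
  set u : ℝ := ∑ c ∈ S, a c / n c with hudef
  set p : ℝ := (S.card : ℝ) with hpdef
  have hp2 : (2:ℝ) ≤ p := by rw [hpdef]; exact_mod_cast hS
  have hW0 : 0 ≤ W := Finset.sum_nonneg fun c hc => sq_nonneg _
  have hV1 : 1 ≤ Vv := by
    obtain ⟨c₀, hc₀⟩ := hne
    calc (1:ℝ) ≤ a c₀ * n c₀ := by nlinarith [ha c₀ hc₀, hn1 c₀ hc₀]
    _ ≤ Vv := Finset.single_le_sum (f := fun c => a c * n c)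
        (fun c hc => le_of_lt (mul_pos (ha0 c hc) (hn0 c hc))) hc₀
  have hV0 : (0:ℝ) < Vv := by linarith
  have hWV : W ≤ Vv := Finset.sum_le_sum fun c hc => by nlinarith [ha c hc, han c hc]
  obtain ⟨cm, hcm, hmax⟩ := S.exists_max_image (fun c => a c / n c) hne
  have hρ0 : 0 ≤ a cm / n cm := le_of_lt (div_pos (ha0 cm hcm) (hn0 cm hcm))
  have hWrV : W ≤ (a cm / n cm) * Vv := by
    have step1 : W = ∑ c ∈ S, (a c / n c) * (a c * n c) := by
      refine Finset.sum_congr rfl fun c hc => ?_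
      have := (hn0 c hc).ne'
      field_simp
    rw [step1, Finset.mul_sum]
    exact Finset.sum_le_sum fun c hc => mul_le_mul_of_nonneg_right (hmax c hc)
      (by nlinarith [ha0 c hc, hn0 c hc])
  have hr : W / Vv ≤ a cm / n cm := by
    rw [div_le_iff₀ hV0]; linarith [hWrV]
  have hr1 : W / Vv ≤ 1 := by
    rw [div_le_one hV0]; exact hWV
  have hr0 : 0 ≤ W / Vv := by positivity
  have hu_low : a cm / n cm + (p - 1) * (1 / N) ≤ u := by
    have hsplit : a cm / n cm + ∑ c ∈ S.erase cm, a c / n c = u :=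
      Finset.add_sum_erase S (fun c => a c / n c) hcm
    have hterm : ∀ c ∈ S.erase cm, 1 / N ≤ a c / n c := by
      intro c hc
      have hcS := Finset.mem_of_mem_erase hc
      rw [div_le_div_iff₀ hNpos (hn0 c hcS)]
      nlinarith [ha c hcS, hnN c hcS, hn1 c hcS]
    have hcard : ((S.erase cm).card : ℝ) = p - 1 := by
      rw [Finset.card_erase_of_mem hcm]
      have : 1 ≤ S.card := by omega
      push_cast [Nat.cast_sub this]
      ring
    have hsum : (p - 1) * (1 / N) ≤ ∑ c ∈ S.erase cm, a c / n c := by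
      have := Finset.card_nsmul_le_sum (S.erase cm) (fun c => a c / n c) (1 / N) hterm
      rwa [nsmul_eq_mul, hcard] at this
    linarith
  have hup : u ≤ p := by
    have := Finset.sum_le_card_nsmul S (fun c => a c / n c) 1
      (fun c hc => by rw [div_le_one (hn0 c hc)]; exact han c hc)
    rwa [nsmul_eq_mul, mul_one] at this
  -- the key scalar inequality
  have key : 0 < γ * (u - W / Vv - u * δ) - (u - 1 + 2 * δ) := by
    have h1 : (p - 1) * (1 / N) ≤ u - W / Vv := by linarith
    have e1 : γ * (u - W / Vv) - (u - 1) - (γ - 1) * (u - W / Vv) = 1 - W / Vv := by ring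
    have h2 : (γ - 1) * ((p - 1) * (1 / N)) ≤ (γ - 1) * (u - W / Vv) :=
      mul_le_mul_of_nonneg_left h1 (by linarith)
    have h4 : γ * p + 2 ≤ 2 * (p - 1) * (γ + 1) := by
      nlinarith [mul_nonneg (by linarith : (0:ℝ) ≤ γ + 2) (by linarith : (0:ℝ) ≤ p - 2)]
    have h5 : γ * δ * u + 2 * δ ≤ 2 * (p - 1) * (γ + 1) * δ := by
      have hγδ : 0 ≤ γ * δ := by positivity
      have := mul_le_mul_of_nonneg_left hup hγδ
      nlinarith [mul_le_mul_of_nonneg_left h4 hδ0]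
    have h6 : 2 * (p - 1) * (γ + 1) * δ < (p - 1) * ((γ - 1) / N) := by
      have hp1 : (0:ℝ) < p - 1 := by linarith
      calc 2 * (p - 1) * (γ + 1) * δ = (p - 1) * (2 * (γ + 1) * δ) := by ring
      _ < (p - 1) * ((γ - 1) / N) := by
          exact mul_lt_mul_of_pos_left hδmain hp1
    have e2 : γ * (u - W / Vv - u * δ) - (u - 1 + 2 * δ)
        = (γ * (u - W / Vv) - (u - 1)) - (γ * δ * u + 2 * δ) := by ring
    have e3 : (γ - 1) * ((p - 1) * (1 / N)) = (p - 1) * ((γ - 1) / N) := by ring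
    linarith
  -- bounds on y-values
  have hDd : (0:ℝ) < M + γ * (k * Vv) := by positivity
  have hyd_up : (k * Vv) / (M + γ * (k * Vv)) ≤ 1 / γ := by
    rw [div_le_div_iff₀ hDd hγ0]
    nlinarith
  have hyd_low : (1 - δ) / γ ≤ (k * Vv) / (M + γ * (k * Vv)) := by
    have hkey0 : δ * (γ * (k * Vv)) = M * Vv := by
      rw [hδdef]; field_simp
    rw [div_le_div_iff₀ hγ0 hDd]
    nlinarith [mul_nonneg hM (by linarith : (0:ℝ) ≤ Vv - 1)]
  have hyd0 : 0 ≤ (1 - δ) / γ := by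
    apply div_nonneg _ (by linarith)
    nlinarith
  have hydsq : ((1 - δ) / γ) ^ 2 ≤ ((k * Vv) / (M + γ * (k * Vv))) ^ 2 :=
    pow_le_pow_left₀ hyd0 hyd_low 2
  have hLW : (k * W) / (M + γ * (k * Vv)) = (W / Vv) * ((k * Vv) / (M + γ * (k * Vv))) := by
    field_simp
  have hLHS : Tterm M γ (k * W) (k * Vv) ≤ (W / Vv) * (1 / γ) - ((1 - δ) / γ) ^ 2 := by
    unfold Tterm
    rw [hLW]
    have := mul_le_mul_of_nonneg_left hyd_up hr0
    linarith
  -- per-part lower bound on RHS terms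
  have hRHS : ∀ c ∈ S, (1 - δ) / γ - (1 / γ) ^ 2 ≤ Tterm M γ (k * (n c) ^ 2) (k * (n c) ^ 2) := by
    intro c hc
    have hn := hn1 c hc
    have hD : (0:ℝ) < M + γ * (k * (n c) ^ 2) := by positivity
    have hy_up : (k * (n c) ^ 2) / (M + γ * (k * (n c) ^ 2)) ≤ 1 / γ := by
      rw [div_le_div_iff₀ hD hγ0]
      nlinarith
    have hy_low : (1 - δ) / γ ≤ (k * (n c) ^ 2) / (M + γ * (k * (n c) ^ 2)) := by
      have hkey0 : δ * (γ * (k * (n c) ^ 2)) = M * (n c) ^ 2 := by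
        rw [hδdef]; field_simp
      rw [div_le_div_iff₀ hγ0 hD]
      nlinarith [mul_nonneg hM (by nlinarith : (0:ℝ) ≤ (n c) ^ 2 - 1)]
    have hy0 : 0 ≤ (k * (n c) ^ 2) / (M + γ * (k * (n c) ^ 2)) := by positivity
    have hysq : ((k * (n c) ^ 2) / (M + γ * (k * (n c) ^ 2))) ^ 2 ≤ (1 / γ) ^ 2 :=
      pow_le_pow_left₀ hy0 hy_up 2
    unfold Tterm
    linarith
  have hRHSsum : u * ((1 - δ) / γ - (1 / γ) ^ 2)
      ≤ ∑ c ∈ S, (a c / n c) * Tterm M γ (k * (n c) ^ 2) (k * (n c) ^ 2) := by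
    rw [hudef, Finset.sum_mul]
    refine Finset.sum_le_sum fun c hc => ?_
    exact mul_le_mul_of_nonneg_left (hRHS c hc) (le_of_lt (div_pos (ha0 c hc) (hn0 c hc)))
  -- final comparison
  have hfinal : (W / Vv) * (1 / γ) - ((1 - δ) / γ) ^ 2 < u * ((1 - δ) / γ - (1 / γ) ^ 2) := by
    have hXY : u * ((1 - δ) / γ - (1 / γ) ^ 2) - ((W / Vv) * (1 / γ) - ((1 - δ) / γ) ^ 2)
        = (γ * (u - W / Vv - u * δ) - (u - 1 + 2 * δ) + δ ^ 2) * (1 / γ) ^ 2 := by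
      field_simp
      ring
    have hpos : 0 < (γ * (u - W / Vv - u * δ) - (u - 1 + 2 * δ) + δ ^ 2) * (1 / γ) ^ 2 :=
      mul_pos (by nlinarith [sq_nonneg δ]) (by positivity)
    linarith
  calc Tterm M γ (k * W) (k * Vv) ≤ (W / Vv) * (1 / γ) - ((1 - δ) / γ) ^ 2 := hLHS
  _ < u * ((1 - δ) / γ - (1 / γ) ^ 2) := hfinal
  _ ≤ ∑ c ∈ S, (a c / n c) * Tterm M γ (k * (n c) ^ 2) (k * (n c) ^ 2) := hRHSsum

end analysis2

end analysisAux

section combAux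
variable {V : Type*} [Fintype V] [DecidableEq V]


lemma cliqueE_eq_sum (C : Finpartition (univ : Finset V)) (k : ℝ) (i j : V) :
    cliqueE C k i j
      = ∑ c ∈ C.parts, (if i ∈ c then (1:ℝ) else 0) * ((if j ∈ c then (1:ℝ) else 0) * k) := by
  unfold cliqueE
  by_cases h : samePart C i j
  · rw [if_pos h]
    obtain ⟨c, hc, hic, hjc⟩ := h
    rw [Finset.sum_eq_single c]
    · simp [hic, hjc]
    · intro c' hc' hne
      by_cases hic' : i ∈ c'
      · exact absurd (C.eq_of_mem_parts hc' hc hic' hic) hne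
      · simp [hic']
    · intro h'; exact absurd hc h'
  · rw [if_neg h]
    symm; apply Finset.sum_eq_zero
    intro c hc
    by_cases hic : i ∈ c
    · by_cases hjc : j ∈ c
      · exact absurd ⟨c, hc, hic, hjc⟩ h
      · simp [hjc]
    · simp [hic]

omit [Fintype V] in
lemma sum_indicator_card (c d : Finset V) :
    ∑ i ∈ d, (if i ∈ c then (1:ℝ) else 0) = ((d ∩ c).card : ℝ) := by
  rw [Finset.sum_ite_mem]
  simp

lemma win_cliqueE (C : Finpartition (univ : Finset V)) (k : ℝ) (d : Finset V) :
    win (cliqueE C k) d = k * ∑ c ∈ C.parts, ((d ∩ c).card : ℝ)^2 := by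
  unfold win
  simp_rw [cliqueE_eq_sum C k]
  conv_lhs => enter [2, i]; rw [Finset.sum_comm]
  rw [Finset.sum_comm, Finset.mul_sum]
  refine Finset.sum_congr rfl fun c _ => ?_
  rw [← Finset.sum_mul_sum, sum_indicator_card, ← Finset.sum_mul, sum_indicator_card]
  ring

lemma vol_cliqueE (C : Finpartition (univ : Finset V)) (k : ℝ) (d : Finset V) :
    vol (cliqueE C k) d = k * ∑ c ∈ C.parts, ((d ∩ c).card : ℝ) * (c.card : ℝ) := by
  unfold vol
  simp_rw [cliqueE_eq_sum C k]
  conv_lhs => enter [2, i]; rw [Finset.sum_comm]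
  rw [Finset.sum_comm, Finset.mul_sum]
  refine Finset.sum_congr rfl fun c _ => ?_
  rw [← Finset.sum_mul_sum, sum_indicator_card, ← Finset.sum_mul, sum_indicator_card]
  rw [univ_inter]
  ring

-- every element's part: sum of indicators over parts is 1
lemma sum_inter_card (P : Finpartition (univ : Finset V)) (c : Finset V) :
    ∑ d ∈ P.parts, ((d ∩ c).card : ℝ) = (c.card : ℝ) := by
  have : ∀ d ∈ P.parts, ((d ∩ c).card : ℝ) = ∑ i ∈ c, (if i ∈ d then (1:ℝ) else 0) := by
    intro d _
    rw [sum_indicator_card d c, Finset.inter_comm]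
  rw [Finset.sum_congr rfl this, Finset.sum_comm]
  have : ∀ i ∈ c, ∑ d ∈ P.parts, (if i ∈ d then (1:ℝ) else 0) = 1 := by
    intro i _
    obtain ⟨t, ⟨ht, hit⟩, huniq⟩ := P.existsUnique_mem (mem_univ i)
    rw [Finset.sum_eq_single t]
    · simp [hit]
    · intro d hd hne
      by_cases hid : i ∈ d
      · exact absurd (huniq d ⟨hd, hid⟩) hne
      · simp [hid]
    · intro h; exact absurd ht h
  rw [Finset.sum_congr rfl this]
  simp


variable {V : Type*} [Fintype V] [DecidableEq V]

lemma inter_parts_eq_empty (C : Finpartition (univ : Finset V)) {c c' : Finset V}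
    (hc : c ∈ C.parts) (hc' : c' ∈ C.parts) (hne : c ≠ c') : c ∩ c' = ∅ := by
  rw [← Finset.disjoint_iff_inter_eq_empty]
  exact C.disjoint hc hc' hne

lemma partW (C : Finpartition (univ : Finset V)) (k : ℝ) {c : Finset V} (hc : c ∈ C.parts) :
    win (cliqueE C k) c = k * (c.card : ℝ) ^ 2 := by
  rw [win_cliqueE]
  congr 1
  rw [Finset.sum_eq_single_of_mem c hc]
  · rw [Finset.inter_self]
  · intro c' hc' hne
    rw [Finset.inter_comm, inter_parts_eq_empty C hc' hc hne]
    simp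

lemma partV (C : Finpartition (univ : Finset V)) (k : ℝ) {c : Finset V} (hc : c ∈ C.parts) :
    vol (cliqueE C k) c = k * (c.card : ℝ) ^ 2 := by
  rw [vol_cliqueE]
  congr 1
  rw [Finset.sum_eq_single_of_mem c hc]
  · rw [Finset.inter_self]; ring
  · intro c' hc' hne
    rw [Finset.inter_comm, inter_parts_eq_empty C hc' hc hne]
    simp

lemma perPartEq (C : Finpartition (univ : Finset V)) (M γ k : ℝ) {d : Finset V}
    (hdC : d ∈ C.parts) :
    ∑ c ∈ C.parts, (((d ∩ c).card : ℝ) / (c.card : ℝ))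
        * Tterm M γ (win (cliqueE C k) c) (vol (cliqueE C k) c)
      = Tterm M γ (win (cliqueE C k) d) (vol (cliqueE C k) d) := by
  rw [Finset.sum_eq_single_of_mem d hdC]
  · rw [Finset.inter_self]
    have hd0 : (d.card : ℝ) ≠ 0 := by
      have := C.nonempty_of_mem_parts hdC
      simp [Finset.card_ne_zero_of_mem this.choose_spec]
    rw [div_self hd0, one_mul]
  · intro c hc hne
    rw [Finset.inter_comm, inter_parts_eq_empty C hc hdC hne]
    simp

lemma perPart (C : Finpartition (univ : Finset V)) (M γ k : ℝ)
    (hM : 0 ≤ M) (hγ : 1 < γ) (hk : 0 < k)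
    (hN : 1 ≤ (Fintype.card V : ℝ))
    (HΔ : 2 * (γ + 1) * (Fintype.card V : ℝ) * M < (γ - 1) * (γ * k))
    {d : Finset V} (hd : d.Nonempty) (hdC : d ∉ C.parts) :
    Tterm M γ (win (cliqueE C k) d) (vol (cliqueE C k) d)
      < ∑ c ∈ C.parts, (((d ∩ c).card : ℝ) / (c.card : ℝ))
          * Tterm M γ (win (cliqueE C k) c) (vol (cliqueE C k) c) := by
  rw [win_cliqueE, vol_cliqueE]
  have hRW : ∀ c ∈ C.parts,
      (((d ∩ c).card : ℝ) / (c.card : ℝ)) * Tterm M γ (win (cliqueE C k) c) (vol (cliqueE C k) c)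
      = (((d ∩ c).card : ℝ) / (c.card : ℝ)) * Tterm M γ (k * (c.card : ℝ)^2) (k * (c.card : ℝ)^2) := by
    intro c hc
    rw [partW C k hc, partV C k hc]
  rw [Finset.sum_congr rfl hRW]
  set S := C.parts.filter (fun c => ((d ∩ c).card ≠ 0)) with hSdef
  have hSsub : S ⊆ C.parts := Finset.filter_subset _ _
  have hredW : ∑ c ∈ S, ((d ∩ c).card : ℝ)^2 = ∑ c ∈ C.parts, ((d ∩ c).card : ℝ)^2 := by
    apply Finset.sum_filter_of_ne
    intro c _ hne
    intro h0
    apply hne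
    rw [h0]
    simp
  have hredV : ∑ c ∈ S, ((d ∩ c).card : ℝ) * (c.card : ℝ)
      = ∑ c ∈ C.parts, ((d ∩ c).card : ℝ) * (c.card : ℝ) := by
    apply Finset.sum_filter_of_ne
    intro c _ hne
    intro h0
    apply hne
    rw [h0]
    simp
  have hredR : ∑ c ∈ S, (((d ∩ c).card : ℝ) / (c.card : ℝ)) * Tterm M γ (k * (c.card : ℝ)^2) (k * (c.card : ℝ)^2)
      = ∑ c ∈ C.parts, (((d ∩ c).card : ℝ) / (c.card : ℝ)) * Tterm M γ (k * (c.card : ℝ)^2) (k * (c.card : ℝ)^2) := by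
    apply Finset.sum_filter_of_ne
    intro c _ hne
    intro h0
    apply hne
    rw [h0]
    simp
  rw [← hredW, ← hredV, ← hredR]
  -- S is nonempty
  have hSne : S.Nonempty := by
    obtain ⟨i, hi⟩ := hd
    obtain ⟨t, ⟨htC, hit⟩, _⟩ := C.existsUnique_mem (mem_univ i)
    refine ⟨t, Finset.mem_filter.2 ⟨htC, ?_⟩⟩
    have : i ∈ d ∩ t := Finset.mem_inter.2 ⟨hi, hit⟩
    exact Finset.card_ne_zero_of_mem this
  -- facts about members of S
  have hmem : ∀ c ∈ S, 1 ≤ ((d ∩ c).card : ℝ) ∧ ((d ∩ c).card : ℝ) ≤ (c.card : ℝ)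
      ∧ (c.card : ℝ) ≤ (Fintype.card V : ℝ) := by
    intro c hc
    have h1 : (d ∩ c).card ≠ 0 := (Finset.mem_filter.1 hc).2
    have h2 : (d ∩ c).card ≤ c.card := Finset.card_le_card (Finset.inter_subset_right)
    have h3 : c.card ≤ Fintype.card V := by
      have := Finset.card_le_univ c
      simpa using this
    refine ⟨by exact_mod_cast Nat.one_le_iff_ne_zero.2 h1, by exact_mod_cast h2, by exact_mod_cast h3⟩
  rcases lt_or_ge S.card 2 with hcard | hcard
  · -- S has exactly one element
    have hone : S.card = 1 := by
      have := Finset.card_pos.2 hSne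
      omega
    obtain ⟨c₀, hc₀eq⟩ := Finset.card_eq_one.1 hone
    have hc₀S : c₀ ∈ S := by rw [hc₀eq]; exact Finset.mem_singleton_self c₀
    have hc₀C : c₀ ∈ C.parts := hSsub hc₀S
    -- d ⊆ c₀
    have hsub : d ⊆ c₀ := by
      intro i hi
      obtain ⟨t, ⟨htC, hit⟩, _⟩ := C.existsUnique_mem (mem_univ i)
      have htS : t ∈ S := by
        refine Finset.mem_filter.2 ⟨htC, ?_⟩
        exact Finset.card_ne_zero_of_mem (Finset.mem_inter.2 ⟨hi, hit⟩)
      have : t = c₀ := by rw [hc₀eq] at htS; exact Finset.mem_singleton.1 htS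
      rwa [← this]
    have hdc₀ : d ∩ c₀ = d := Finset.inter_eq_left.2 hsub
    have hlt : d.card < c₀.card := by
      rcases lt_or_eq_of_le (Finset.card_le_card hsub) with h | h
      · exact h
      · exfalso
        exact hdC (Finset.eq_of_subset_of_card_le hsub h.ge ▸ hc₀C)
    rw [hc₀eq, Finset.sum_singleton, Finset.sum_singleton, Finset.sum_singleton, hdc₀]
    have e1 : (d.card : ℝ) * (c₀.card : ℝ) = (d.card : ℝ) * (c₀.card : ℝ) := rfl
    have := caseI hM hγ hk hN HΔ (d.card : ℝ) (c₀.card : ℝ)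
      (by exact_mod_cast Nat.one_le_iff_ne_zero.2 (Finset.card_ne_zero_of_mem hd.choose_spec))
      (by exact_mod_cast hlt)
      (by exact_mod_cast Finset.card_le_univ c₀)
    convert this using 3
  · -- S has at least two elements
    exact caseII hM hγ hk hN HΔ S (fun c => ((d ∩ c).card : ℝ)) (fun c => ((c.card : ℝ))) hcard
      (fun c hc => (hmem c hc).1) (fun c hc => (hmem c hc).2.1) (fun c hc => (hmem c hc).2.2)


end combAux

/-- Adaptive scale modularity is rich for `M ≥ 0`, `γ > 1`: on the clique graph of `C`
with sufficiently large weight `k` (namely `k > 3|V|β²M/ε` with `β = 1/γ` and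
`ε = min(β, 1-β, 1/|V|)/2`), the partition `C` is the unique maximizer. -/
theorem adaptive_scale_modularity_is_rich
    {V : Type*} [Fintype V] [DecidableEq V] [Nonempty V]
    (M γ : ℝ) (hM : 0 ≤ M) (hγ : 1 < γ)
    (C : Finpartition (univ : Finset V)) (k : ℝ)
    (hk : k > 3 * (Fintype.card V : ℝ) * (1 / γ) ^ 2 * M /
        (min (1 / γ) (min (1 - 1 / γ) (1 / (Fintype.card V : ℝ))) / 2)) :
    ∀ D : Finpartition (univ : Finset V), D ≠ C →
      Qasm (cliqueE C k) M γ D.parts < Qasm (cliqueE C k) M γ C.parts := by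
  intro D hD
  have hγ0 : (0:ℝ) < γ := by linarith
  have hN : (1:ℝ) ≤ (Fintype.card V : ℝ) := by
    exact_mod_cast Nat.one_le_iff_ne_zero.2 (Fintype.card_ne_zero)
  have hNpos : (0:ℝ) < (Fintype.card V : ℝ) := by linarith
  set N : ℝ := (Fintype.card V : ℝ) with hNdef
  have hg0 : (0:ℝ) < 1 / γ := by positivity
  have hg1 : 1 / γ < 1 := by rw [div_lt_one hγ0]; exact hγ
  have hμ0 : (0:ℝ) < min (1 / γ) (min (1 - 1 / γ) (1 / N)) := by
    apply lt_min hg0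
    apply lt_min (by linarith) (by positivity)
  set μ : ℝ := min (1 / γ) (min (1 - 1 / γ) (1 / N)) with hμdef
  have hk0 : (0:ℝ) < k := by
    have hnum : (0:ℝ) ≤ 3 * N * (1 / γ) ^ 2 * M := by positivity
    have : (0:ℝ) ≤ 3 * N * (1 / γ) ^ 2 * M / (μ / 2) := div_nonneg hnum (by linarith)
    linarith
  -- derive HΔ
  have hkμ : 3 * N * (1 / γ) ^ 2 * M < k * (μ / 2) := by
    rw [gt_iff_lt, div_lt_iff₀ (by linarith : (0:ℝ) < μ / 2)] at hk
    linarith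
  have HΔ : 2 * (γ + 1) * N * M < (γ - 1) * (γ * k) := by
    rcases eq_or_lt_of_le hM with hM0 | hM0
    · rw [← hM0]
      have : (0:ℝ) < (γ - 1) * (γ * k) := by
        apply mul_pos (by linarith) (by positivity)
      linarith
    · set g : ℝ := 1 / γ with hgdef
      have hgγ : g * γ = 1 := by rw [hgdef]; field_simp
      rcases le_or_gt 2 γ with hγ2 | hγ2
      · -- γ ≥ 2 : use μ ≤ g
        have hμle : μ ≤ g := min_le_left _ _
        have h2 : 3 * N * g ^ 2 * M < k * g / 2 := by
          have : k * (μ / 2) ≤ k * g / 2 := by nlinarith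
          linarith
        have h3 : 6 * N * M < γ * k := by
          have h4 := mul_lt_mul_of_pos_right h2 (show (0:ℝ) < γ ^ 2 by positivity)
          have e1 : 3 * N * g ^ 2 * M * γ ^ 2 = 3 * N * M * ((g * γ) * (g * γ)) := by ring
          have e2 : k * g / 2 * γ ^ 2 = γ * k / 2 * (g * γ) := by ring
          rw [e1, e2, hgγ] at h4
          linarith
        have h5 : 2 * (γ + 1) * N * M ≤ 6 * (γ - 1) * N * M := by
          nlinarith [mul_nonneg (le_of_lt hNpos) hM, hγ2]
        have h6 : 6 * (γ - 1) * N * M < (γ - 1) * (γ * k) := by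
          have := mul_lt_mul_of_pos_left h3 (show (0:ℝ) < γ - 1 by linarith)
          nlinarith
        linarith
      · -- γ < 2 : use μ ≤ 1 - g
        have hμle : μ ≤ 1 - g := le_trans (min_le_right _ _) (min_le_left _ _)
        have h2 : 3 * N * g ^ 2 * M < k * (1 - g) / 2 := by
          have : k * (μ / 2) ≤ k * (1 - g) / 2 := by nlinarith
          linarith
        have h3 : 6 * N * M < (γ - 1) * (γ * k) := by
          have h4 := mul_lt_mul_of_pos_right h2 (show (0:ℝ) < γ ^ 2 by positivity)
          have e1 : 3 * N * g ^ 2 * M * γ ^ 2 = 3 * N * M * ((g * γ) * (g * γ)) := by ring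
          have e2 : k * (1 - g) / 2 * γ ^ 2 = (γ * (γ * k) - (γ * k) * (g * γ)) / 2 := by ring
          rw [e1, e2, hgγ] at h4
          nlinarith
        have h5 : 2 * (γ + 1) * N * M < 6 * N * M := by
          have hNM : 0 < N * M := mul_pos hNpos hM0
          nlinarith
        linarith
  -- witness part of D not in C
  have hsub : ¬ D.parts ⊆ C.parts := by
    intro hsub
    apply hD
    apply Finpartition.ext
    apply Finset.Subset.antisymm hsub
    intro c hc
    obtain ⟨i, hi⟩ := C.nonempty_of_mem_parts hc
    obtain ⟨t, ⟨htD, hit⟩, _⟩ := D.existsUnique_mem (mem_univ i)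
    have htC : t ∈ C.parts := hsub htD
    have : t = c := C.eq_of_mem_parts htC hc hit hi
    rwa [← this]
  obtain ⟨d₀, hd₀D, hd₀C⟩ := Finset.not_subset.1 hsub
  -- main chain
  have step1 : Qasm (cliqueE C k) M γ D.parts
      < ∑ d ∈ D.parts, ∑ c ∈ C.parts, (((d ∩ c).card : ℝ) / (c.card : ℝ))
          * Tterm M γ (win (cliqueE C k) c) (vol (cliqueE C k) c) := by
    apply Finset.sum_lt_sum
    · intro d hdD
      by_cases hdC : d ∈ C.parts
      · exact le_of_eq (perPartEq C M γ k hdC).symm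
      · exact le_of_lt (perPart C M γ k hM hγ hk0 hN HΔ (D.nonempty_of_mem_parts hdD) hdC)
    · exact ⟨d₀, hd₀D, perPart C M γ k hM hγ hk0 hN HΔ (D.nonempty_of_mem_parts hd₀D) hd₀C⟩
  have step2 : ∑ d ∈ D.parts, ∑ c ∈ C.parts, (((d ∩ c).card : ℝ) / (c.card : ℝ))
          * Tterm M γ (win (cliqueE C k) c) (vol (cliqueE C k) c)
      = Qasm (cliqueE C k) M γ C.parts := by
    rw [Finset.sum_comm]
    show ∑ c ∈ C.parts, ∑ d ∈ D.parts, (((d ∩ c).card : ℝ) / (c.card : ℝ))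
          * Tterm M γ (win (cliqueE C k) c) (vol (cliqueE C k) c)
      = ∑ c ∈ C.parts, (win (cliqueE C k) c / (M + γ * vol (cliqueE C k) c)
          - (vol (cliqueE C k) c / (M + γ * vol (cliqueE C k) c)) ^ 2)
    refine Finset.sum_congr rfl fun c hc => ?_
    have hc0 : (c.card : ℝ) ≠ 0 := by
      obtain ⟨i, hi⟩ := C.nonempty_of_mem_parts hc
      exact_mod_cast Finset.card_ne_zero_of_mem hi
    rw [← Finset.sum_mul, ← Finset.sum_div, sum_inter_card D c, div_self hc0, one_mul]
    rfl
  calc Qasm (cliqueE C k) M γ D.parts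
      < ∑ d ∈ D.parts, ∑ c ∈ C.parts, (((d ∩ c).card : ℝ) / (c.card : ℝ))
          * Tterm M γ (win (cliqueE C k) c) (vol (cliqueE C k) c) := step1
  _ = Qasm (cliqueE C k) M γ C.parts := step2
end

section
/- Adaptive scale modularity is monotonic for all M ≥ 0 and γ ≥ 2: if G' is a C-consistent improvement of G (within-cluster edge weights do not decrease, between-cluster edge weights do not increase), then Q_{M,γ}(G',C) ≥ Q_{M,γ}(G,C). -/
open Finset
open scoped Classical

set_option maxHeartbeats 1000000 in

lemma g_mono (M γ w b w' b' : ℝ) (hM : 0 ≤ M) (hγ : 2 ≤ γ)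
    (hw : 0 ≤ w) (hb' : 0 ≤ b') (hww : w ≤ w') (hbb : b' ≤ b) :
    w / (M + γ * (w + b)) - ((w + b) / (M + γ * (w + b))) ^ 2
      ≤ w' / (M + γ * (w' + b')) - ((w' + b') / (M + γ * (w' + b'))) ^ 2 := by
  have hγ0 : (0:ℝ) < γ := by linarith
  have hb : 0 ≤ b := hb'.trans hbb
  have hw' : 0 ≤ w' := hw.trans hww
  have hD'0 : 0 ≤ M + γ * (w' + b') := by nlinarith
  have rew : ∀ x y : ℝ, 0 < M + γ * (x + y) →
      x / (M + γ * (x + y)) - ((x + y) / (M + γ * (x + y))) ^ 2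
        = (x * (M + γ * (x + y)) - (x + y) ^ 2) / (M + γ * (x + y)) ^ 2 := by
    intro x y h
    field_simp
  rcases hD'0.eq_or_lt with hD' | hD'
  · -- degenerate: M = 0, w' = 0, b' = 0, hence w = 0
    have hM0 : M = 0 := by nlinarith
    have hw'0 : w' = 0 := by nlinarith
    have hw0 : w = 0 := le_antisymm (hww.trans hw'0.le) hw
    have hb'0 : b' = 0 := by nlinarith
    subst hM0 hw'0 hw0 hb'0
    simp only [zero_div, zero_add, add_zero, mul_zero, div_zero, sub_zero]
    nlinarith [sq_nonneg (b / (γ * b))]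
  · have hD0 : 0 ≤ M + γ * (w + b) := by nlinarith
    rcases hD0.eq_or_lt with hD | hD
    · -- M = 0, w = 0, b = 0, hence b' = 0 and w' > 0
      have hM0 : M = 0 := by nlinarith
      have hw0 : w = 0 := by nlinarith
      have hb0 : b = 0 := by nlinarith
      have hb'0 : b' = 0 := le_antisymm (hbb.trans hb0.le) hb'
      subst hM0 hw0 hb0 hb'0
      have hw'pos : 0 < w' := by nlinarith
      simp only [zero_add, add_zero, zero_div, mul_zero, div_zero, sub_zero,
        zero_pow, sub_self]
      have e2 : w' / (γ * w') = 1 / γ := by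
        rw [mul_comm, ← div_div, div_self (ne_of_gt hw'pos)]
      rw [e2]
      have h1 : 1 / γ ≤ 1 := by rw [div_le_one hγ0]; linarith
      have h2 : 0 < 1 / γ := by positivity
      nlinarith [mul_le_mul_of_nonneg_left h1 h2.le]
    · -- both denominators positive; go through middle point (w', b)
      have hDm : 0 < M + γ * (w' + b) := by nlinarith
      have hγ2 : (0:ℝ) ≤ γ - 2 := by linarith
      have hv : (0:ℝ) ≤ w + b := by linarith
      have hvb : (0:ℝ) ≤ w' + b' := by linarith
      have A1 : 0 ≤ M ^ 2 + γ * b * M + (γ - 2) * (w + b) * M + γ ^ 2 * (w + b) * b := by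
        nlinarith [sq_nonneg M, mul_nonneg (mul_nonneg hγ0.le hb) hM,
          mul_nonneg (mul_nonneg hγ2 hv) hM,
          mul_nonneg (mul_nonneg (sq_nonneg γ) hv) hb]
      have A2 : 0 ≤ (γ - 1) * M ^ 2 + γ ^ 2 * b * M + γ * (γ - 2) * (w + b) * M
          + γ ^ 3 * (w + b) * b := by
        nlinarith [mul_nonneg (by linarith : (0:ℝ) ≤ γ - 1) (sq_nonneg M),
          mul_nonneg (mul_nonneg (sq_nonneg γ) hb) hM,
          mul_nonneg (mul_nonneg (mul_nonneg hγ0.le hγ2) hv) hM,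
          mul_nonneg (mul_nonneg (mul_nonneg (mul_nonneg hγ0.le hγ0.le) hγ0.le) hv) hb]
      have step1 : w / (M + γ * (w + b)) - ((w + b) / (M + γ * (w + b))) ^ 2
          ≤ w' / (M + γ * (w' + b)) - ((w' + b) / (M + γ * (w' + b))) ^ 2 := by
        rw [rew w b hD, rew w' b hDm, div_le_div_iff₀ (by positivity) (by positivity)]
        have hid : (w' * (M + γ * (w' + b)) - (w' + b) ^ 2) * (M + γ * (w + b)) ^ 2
            - (w * (M + γ * (w + b)) - (w + b) ^ 2) * (M + γ * (w' + b)) ^ 2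
            = (w' - w) * (M + γ * (w + b)) *
                (M ^ 2 + γ * b * M + (γ - 2) * (w + b) * M + γ ^ 2 * (w + b) * b)
              + (w' - w) ^ 2 * ((γ - 1) * M ^ 2 + γ ^ 2 * b * M
                + γ * (γ - 2) * (w + b) * M + γ ^ 3 * (w + b) * b) := by ring
        linarith [hid, mul_nonneg (mul_nonneg (sub_nonneg.2 hww) hD.le) A1,
          mul_nonneg (sq_nonneg (w' - w)) A2]
      have B1 : 0 ≤ γ * w' * (M + γ * (w' + b')) + 2 * (w' + b') * M := by
        nlinarith [mul_nonneg (mul_nonneg hγ0.le hw') hD'.le, mul_nonneg hvb hM]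
      have B2 : 0 ≤ γ ^ 2 * w' * (M + γ * (w' + b')) + M ^ 2 + 2 * γ * (w' + b') * M := by
        nlinarith [mul_nonneg (mul_nonneg (sq_nonneg γ) hw') hD'.le, sq_nonneg M,
          mul_nonneg (mul_nonneg hγ0.le hvb) hM]
      have step2 : w' / (M + γ * (w' + b)) - ((w' + b) / (M + γ * (w' + b))) ^ 2
          ≤ w' / (M + γ * (w' + b')) - ((w' + b') / (M + γ * (w' + b'))) ^ 2 := by
        rw [rew w' b hDm, rew w' b' hD', div_le_div_iff₀ (by positivity) (by positivity)]
        have hid : (w' * (M + γ * (w' + b')) - (w' + b') ^ 2) * (M + γ * (w' + b)) ^ 2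
            - (w' * (M + γ * (w' + b)) - (w' + b) ^ 2) * (M + γ * (w' + b')) ^ 2
            = (b - b') * (M + γ * (w' + b')) *
                (γ * w' * (M + γ * (w' + b')) + 2 * (w' + b') * M)
              + (b - b') ^ 2 * (γ ^ 2 * w' * (M + γ * (w' + b')) + M ^ 2
                + 2 * γ * (w' + b') * M) := by ring
        linarith [hid, mul_nonneg (mul_nonneg (sub_nonneg.2 hbb) hD'.le) B1,
          mul_nonneg (sq_nonneg (b - b')) B2]
      linarith

/-- Adaptive scale modularity is monotonic for `M ≥ 0`, `γ ≥ 2`: a `C`-consistent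
improvement of a (nonnegatively weighted) graph does not decrease the quality. -/
theorem adaptive_scale_modularity_monotonic
    {V : Type*} [Fintype V] [DecidableEq V]
    (M γ : ℝ) (hM : 0 ≤ M) (hγ : 2 ≤ γ)
    (E E' : V → V → ℝ) (hE : ∀ i j, 0 ≤ E i j) (hE' : ∀ i j, 0 ≤ E' i j)
    (C : Finpartition (univ : Finset V))
    (himp : ∀ i j, (samePart C i j → E i j ≤ E' i j) ∧ (¬ samePart C i j → E' i j ≤ E i j)) :
    Qasm E M γ C.parts ≤ Qasm E' M γ C.parts := by
  unfold Qasm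
  apply Finset.sum_le_sum
  intro c hc
  have hvol : ∀ F : V → V → ℝ, vol F c = win F c + ∑ i ∈ c, ∑ j ∈ cᶜ, F i j := by
    intro F
    unfold vol win
    rw [← Finset.sum_add_distrib]
    exact Finset.sum_congr rfl fun i _ => (Finset.sum_add_sum_compl c (F i)).symm
  have hnot : ∀ i ∈ c, ∀ j ∈ cᶜ, ¬ samePart C i j := by
    intro i hi j hj hsame
    obtain ⟨d, hd, hid, hjd⟩ := hsame
    have : d = c := C.eq_of_mem_parts hd hc hid hi
    exact (Finset.mem_compl.1 hj) (this ▸ hjd)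
  have hwin : win E c ≤ win E' c :=
    Finset.sum_le_sum fun i hi => Finset.sum_le_sum fun j hj => (himp i j).1 ⟨c, hc, hi, hj⟩
  have hbout : (∑ i ∈ c, ∑ j ∈ cᶜ, E' i j) ≤ ∑ i ∈ c, ∑ j ∈ cᶜ, E i j :=
    Finset.sum_le_sum fun i hi => Finset.sum_le_sum fun j hj =>
      (himp i j).2 (hnot i hi j hj)
  have hwinE : 0 ≤ win E c :=
    Finset.sum_nonneg fun i _ => Finset.sum_nonneg fun j _ => hE i j
  have hboutE' : 0 ≤ ∑ i ∈ c, ∑ j ∈ cᶜ, E' i j :=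
    Finset.sum_nonneg fun i _ => Finset.sum_nonneg fun j _ => hE' i j
  rw [hvol E, hvol E']
  exact g_mono M γ (win E c) (∑ i ∈ c, ∑ j ∈ cᶜ, E i j) (win E' c)
    (∑ i ∈ c, ∑ j ∈ cᶜ, E' i j) hM hγ hwinE hboutE' hwin hbout
end
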